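/- arXiv:1310.3458 — 2 statements merged into one kernel-verified Lean document; each statement's English description precedes it below -/
import Mathlib

section
/- Let f : ℝ → ℝ be continuous and bounded below by an affine function, with convex envelope f**. Then inf over all integrable functions m : [-1/2,1/2)^d → ℝ (taking values in the domain of f) with ∫ m(x) dx = m̄ of ∫ f(m(x)) dx equals f**(m̄). -/
open MeasureTheory

/-- The unit cell `[-1/2, 1/2)^d` of the torus. -/
noncomputable def unitBox (d : ℕ) : Set (Fin d → ℝ) :=
  Set.univ.pi fun _ => Set.Ico (-(1 / 2) : ℝ) (1 / 2)

/-- The convex envelope of `f`: the largest convex function not exceeding `f`. -/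
noncomputable def convEnv (f : ℝ → ℝ) (m : ℝ) : ℝ :=
  sSup {y : ℝ | ∃ g : ℝ → ℝ, ConvexOn ℝ Set.univ g ∧ (∀ x, g x ≤ f x) ∧ y = g m}

/-!
Jensen's inequality applied to the convex envelope `f**`, which is continuous and lies between
an affine minorant and `f`, gives `f**(m̄) ≤ ∫ f(m)` for every admissible profile. Conversely,
splitting the box along one coordinate into slabs of volumes `θ` and `1 - θ` realises every
two-point combination `θ f(a) + (1 - θ) f(b)` with `θ a + (1 - θ) b = m̄`; a value lying below
all these chords at `m̄` is attained by an affine minorant of `f` there, hence is at most `f**(m̄)`.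
-/

lemma convexOn_affine (a b : ℝ) : ConvexOn ℝ Set.univ fun x : ℝ => a * x + b :=
  ((LinearMap.mul ℝ ℝ a).convexOn convex_univ).add_const b

section ConvexEnvelope

variable {f : ℝ → ℝ}

lemma le_convEnv {g : ℝ → ℝ} (hg : ConvexOn ℝ Set.univ g) (hgf : ∀ x, g x ≤ f x) (m : ℝ) :
    g m ≤ convEnv f m :=
  le_csSup ⟨f m, by rintro _ ⟨g, -, hgf, rfl⟩; exact hgf m⟩ ⟨g, hg, hgf, rfl⟩

variable {a b : ℝ} (hab : ∀ x, a * x + b ≤ f x)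
include hab

lemma affine_le_convEnv (m : ℝ) : a * m + b ≤ convEnv f m :=
  le_convEnv (convexOn_affine a b) hab m

lemma convEnv_le (m : ℝ) : convEnv f m ≤ f m :=
  csSup_le ⟨_, _, convexOn_affine a b, hab, rfl⟩ (by rintro _ ⟨g, -, hgf, rfl⟩; exact hgf m)

lemma convexOn_convEnv : ConvexOn ℝ Set.univ (convEnv f) := by
  refine ⟨convex_univ, fun x _ y _ s t hs ht hst => ?_⟩
  refine csSup_le ⟨_, _, convexOn_affine a b, hab, rfl⟩ ?_
  rintro _ ⟨g, hg, hgf, rfl⟩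
  calc g (s • x + t • y) ≤ s • g x + t • g y := hg.2 trivial trivial hs ht hst
    _ ≤ s • convEnv f x + t • convEnv f y := by
      gcongr <;> exact le_convEnv hg hgf _

lemma continuous_convEnv : Continuous (convEnv f) :=
  continuousOn_univ.1 <| (convexOn_convEnv hab).continuousOn isOpen_univ

end ConvexEnvelope

/-- The slope is the supremum of the left slopes `(c - f a) / (m - a)`. -/
lemma exists_affine_le_of_le_chord {f : ℝ → ℝ} {m c : ℝ}
    (hchord : ∀ θ a b : ℝ, 0 ≤ θ → θ ≤ 1 → θ * a + (1 - θ) * b = m →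
      c ≤ θ * f a + (1 - θ) * f b) :
    ∃ s, ∀ x, c + s * (x - m) ≤ f x := by
  have hslope : ∀ a b, a < m → m < b → (c - f a) / (m - a) ≤ (f b - c) / (b - m) := by
    intro a b ha hb
    have hba : b - a ≠ 0 := by linarith
    have h := hchord ((b - m) / (b - a)) a b (div_nonneg (by linarith) (by linarith))
      (div_le_one_of_le₀ (by linarith) (by linarith)) (by field_simp; ring)
    have e : (b - a) * ((b - m) / (b - a) * f a + (1 - (b - m) / (b - a)) * f b)
        = (b - m) * f a + (m - a) * f b := by
      field_simp; ring
    have key := mul_le_mul_of_nonneg_left h (by linarith : (0 : ℝ) ≤ b - a)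
    rw [e] at key
    rw [div_le_div_iff₀ (by linarith) (by linarith)]
    linarith
  set S := (fun a => (c - f a) / (m - a)) '' Set.Iio m
  have hS : S.Nonempty := ⟨_, m - 1, by simp, rfl⟩
  have hSle : ∀ b, m < b → sSup S ≤ (f b - c) / (b - m) := fun b hb =>
    csSup_le hS (by rintro _ ⟨a, ha, rfl⟩; exact hslope a b ha hb)
  refine ⟨sSup S, fun x => ?_⟩
  rcases lt_trichotomy x m with hx | rfl | hx
  · have h : (c - f x) / (m - x) ≤ sSup S :=
      le_csSup ⟨_, by rintro _ ⟨a, ha, rfl⟩; exact hslope a (m + 1) ha (by linarith)⟩ ⟨x, hx, rfl⟩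
    rw [div_le_iff₀ (by linarith)] at h
    linarith
  · simpa using hchord 1 x x zero_le_one le_rfl (by ring)
  · have h := hSle x hx
    rw [le_div_iff₀ (by linarith)] at h
    linarith

lemma le_convEnv_of_le_chord {f : ℝ → ℝ} {m c : ℝ}
    (hchord : ∀ θ a b : ℝ, 0 ≤ θ → θ ≤ 1 → θ * a + (1 - θ) * b = m →
      c ≤ θ * f a + (1 - θ) * f b) :
    c ≤ convEnv f m := by
  obtain ⟨s, hs⟩ := exists_affine_le_of_le_chord hchord
  have h := affine_le_convEnv (a := s) (b := c - s * m) (f := f) (fun x => by linarith [hs x]) m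
  linarith

lemma csInf_eq_convEnv_of_chord_mem {f : ℝ → ℝ} {m : ℝ} {P : Set ℝ}
    (hlower : ∀ y ∈ P, convEnv f m ≤ y)
    (hchord : ∀ θ a b : ℝ, 0 ≤ θ → θ ≤ 1 → θ * a + (1 - θ) * b = m →
      θ * f a + (1 - θ) * f b ∈ P) :
    sInf P = convEnv f m :=
  le_antisymm
    (le_convEnv_of_le_chord fun θ a b h0 h1 hm => csInf_le ⟨_, hlower⟩ (hchord θ a b h0 h1 hm))
    (le_csInf ⟨_, hchord 1 m m zero_le_one le_rfl (by ring)⟩ hlower)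

lemma convEnv_integral_le {α : Type*} [MeasurableSpace α] {μ : Measure α}
    [IsProbabilityMeasure μ] {f : ℝ → ℝ} {a b : ℝ} (hab : ∀ x, a * x + b ≤ f x)
    {m : α → ℝ} (hm : Integrable m μ) (hfm : Integrable (fun x => f (m x)) μ) :
    convEnv f (∫ x, m x ∂μ) ≤ ∫ x, f (m x) ∂μ := by
  have henv : Integrable (fun x => convEnv f (m x)) μ :=
    integrable_of_le_of_le
      ((continuous_convEnv hab).comp_aestronglyMeasurable hm.aestronglyMeasurable)
      (ae_of_all _ fun x => affine_le_convEnv hab (m x)) (ae_of_all _ fun x => convEnv_le hab (m x))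
      ((hm.const_mul a).add (integrable_const b)) hfm
  calc convEnv f (∫ x, m x ∂μ) ≤ ∫ x, convEnv f (m x) ∂μ :=
        (convexOn_convEnv hab).map_integral_le (continuous_convEnv hab).continuousOn
          isClosed_univ (ae_of_all _ fun _ => trivial) hm henv
    _ ≤ ∫ x, f (m x) ∂μ := integral_mono henv hfm fun x => convEnv_le hab (m x)

lemma integrable_piecewise_const {α : Type*} [MeasurableSpace α] {μ : Measure α}
    [IsFiniteMeasure μ] {S : Set α} [DecidablePred (· ∈ S)] (hS : MeasurableSet S) (u v : ℝ) :
    Integrable (S.piecewise (fun _ => u) (fun _ => v)) μ :=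
  Integrable.piecewise hS (integrable_const u).integrableOn (integrable_const v).integrableOn

lemma integral_piecewise_const {α : Type*} [MeasurableSpace α] {μ : Measure α}
    [IsProbabilityMeasure μ] {S : Set α} [DecidablePred (· ∈ S)] (hS : MeasurableSet S)
    (u v : ℝ) :
    ∫ x, S.piecewise (fun _ => u) (fun _ => v) x ∂μ = μ.real S * u + (1 - μ.real S) * v := by
  rw [integral_piecewise hS (integrable_const u).integrableOn (integrable_const v).integrableOn,
    setIntegral_const, setIntegral_const, probReal_compl_eq_one_sub hS, smul_eq_mul, smul_eq_mul]

lemma volume_unitBox (d : ℕ) : volume (unitBox d) = 1 := by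
  simp [unitBox, volume_pi_pi, Real.volume_Ico]; norm_num

instance (d : ℕ) : IsProbabilityMeasure (volume.restrict (unitBox d)) :=
  ⟨by rw [Measure.restrict_apply_univ, volume_unitBox]⟩

lemma measureReal_unitBox_coord_lt {d : ℕ} (i : Fin d) {c : ℝ} (h0 : -(1 / 2) ≤ c)
    (h1 : c ≤ 1 / 2) :
    (volume.restrict (unitBox d)).real {x | x i < c} = c + 1 / 2 := by
  have : IsProbabilityMeasure (volume.restrict (Set.Ico (-(1 / 2) : ℝ) (1 / 2))) :=
    ⟨by simp [Real.volume_Ico]; norm_num⟩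
  have hproj := measurePreserving_eval
    (fun _ : Fin d => volume.restrict (Set.Ico (-(1 / 2) : ℝ) (1 / 2))) i
  rw [unitBox, volume_pi, Measure.restrict_pi_pi]
  change (Measure.pi _).real ((fun x : Fin d → ℝ => x i) ⁻¹' Set.Iio c) = _
  rw [measureReal_def, hproj.measure_preimage measurableSet_Iio.nullMeasurableSet,
    Measure.restrict_apply measurableSet_Iio,
    Set.inter_comm, Set.Ico_inter_Iio, min_eq_right h1,
    Real.volume_Ico, ENNReal.toReal_ofReal (by linarith)]
  ring

lemma exists_unitBox_twoValued {d : ℕ} (hd : 0 < d) (f : ℝ → ℝ) {θ : ℝ} (h0 : 0 ≤ θ)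
    (h1 : θ ≤ 1) (a b : ℝ) :
    ∃ m : (Fin d → ℝ) → ℝ, IntegrableOn m (unitBox d) ∧
      IntegrableOn (fun x => f (m x)) (unitBox d) ∧
      (∫ x in unitBox d, m x) = θ * a + (1 - θ) * b ∧
      (∫ x in unitBox d, f (m x)) = θ * f a + (1 - θ) * f b := by
  classical
  set S : Set (Fin d → ℝ) := {x | x ⟨0, hd⟩ < θ - 1 / 2}
  have hS : MeasurableSet S := measurableSet_lt (measurable_pi_apply _) measurable_const
  have hθ : (volume.restrict (unitBox d)).real S = θ := by
    rw [measureReal_unitBox_coord_lt _ (by linarith) (by linarith)]; ring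
  have hfm : (fun x => f (S.piecewise (fun _ => a) (fun _ => b) x))
      = S.piecewise (fun _ => f a) (fun _ => f b) := by
    funext x; exact apply_ite f _ _ _
  refine ⟨S.piecewise (fun _ => a) (fun _ => b), ?_, ?_, ?_, ?_⟩
  · exact integrable_piecewise_const hS a b
  · rw [hfm]
    exact integrable_piecewise_const hS (f a) (f b)
  · rw [integral_piecewise_const hS, hθ]
  · rw [hfm, integral_piecewise_const hS, hθ]

theorem stmt14_general (d : ℕ) (hd : 0 < d) (f : ℝ → ℝ)
    (hmin : ∃ a b : ℝ, ∀ m, a * m + b ≤ f m) (mbar : ℝ) :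
    sInf {y : ℝ | ∃ m : (Fin d → ℝ) → ℝ,
        IntegrableOn m (unitBox d) ∧ IntegrableOn (fun x => f (m x)) (unitBox d) ∧
        (∫ x in unitBox d, m x) = mbar ∧ y = ∫ x in unitBox d, f (m x)}
      = convEnv f mbar := by
  obtain ⟨a, b, hab⟩ := hmin
  refine csInf_eq_convEnv_of_chord_mem ?_ fun θ u v h0 h1 hmean => ?_
  · rintro _ ⟨m, hm, hfm, rfl, rfl⟩
    exact convEnv_integral_le hab hm hfm
  · obtain ⟨m, hm, hfm, hint, hfint⟩ := exists_unitBox_twoValued hd f h0 h1 u v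
    exact ⟨m, hm, hfm, hint.trans hmean, hfint.symm⟩

/-- The infimum of `∫ f(m(x)) dx` over integrable profiles `m` on the torus with
mean `m̄` equals the convex envelope `f**(m̄)`. -/
theorem stmt14 (d : ℕ) (hd : 0 < d) (f : ℝ → ℝ) (hf : Continuous f)
    (hmin : ∃ a b : ℝ, ∀ m, a * m + b ≤ f m) (mbar : ℝ) :
    sInf {y : ℝ | ∃ m : (Fin d → ℝ) → ℝ,
        IntegrableOn m (unitBox d) ∧ IntegrableOn (fun x => f (m x)) (unitBox d) ∧
        (∫ x in unitBox d, m x) = mbar ∧ y = ∫ x in unitBox d, f (m x)}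
      = convEnv f mbar :=
  stmt14_general d hd f hmin mbar
end

section
/- Let f(β,m) = -(1/(Nβ)) log ∑_{configs} χ(∑σ_i = Nm) e^{-βH_0} be the restricted canonical free energy density and g(β,h) the canonical free energy density at field h. Then in the large-N limit, g(β,h) = inf_m [f(β,m) - h·m]. -/
open Filter

/-- Laplace principle (equation (22) of the paper): for a sequence of finite systems
whose achievable magnetization densities `A N` lie in a compact set `K`, have
polynomially growing cardinality and become dense in `K`, and whose restricted free
energy densities `fN N` converge uniformly on `K` to a continuous `f`, the canonical
free energy density converges to `g(β,h) = inf_m [f(m) - h·m]`. -/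
theorem stmt19 (β h : ℝ) (hβ : 0 < β)
    (K : Set ℝ) (hK : IsCompact K) (hKne : K.Nonempty)
    (A : ℕ → Finset ℝ) (hAne : ∀ N, (A N).Nonempty) (hAK : ∀ N, ↑(A N) ⊆ K)
    (hcard : ∃ C p : ℝ, ∀ N : ℕ, ((A N).card : ℝ) ≤ C * (N : ℝ) ^ p)
    (hdense : ∀ m ∈ K, ∀ ε > 0, ∃ N₀ : ℕ, ∀ N ≥ N₀, ∃ m' ∈ A N, |m' - m| < ε)
    (f : ℝ → ℝ) (hf : ContinuousOn f K)
    (fN : ℕ → ℝ → ℝ) (hunif : TendstoUniformlyOn fN f atTop K) :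
    Tendsto (fun N : ℕ => -(1 / ((N : ℝ) * β)) *
        Real.log (∑ m ∈ A N, Real.exp (-(N : ℝ) * β * (fN N m - h * m))))
      atTop (nhds (sInf ((fun m => f m - h * m) '' K))) := by
  obtain ⟨C, p, hC⟩ := hcard
  -- minimizer
  have hφc : ContinuousOn (fun m => f m - h * m) K :=
    hf.sub (continuousOn_const.mul continuousOn_id)
  obtain ⟨m₀, hm₀K, hmin⟩ := hK.exists_isMinOn hKne hφc
  have hmin' : ∀ m ∈ K, f m₀ - h * m₀ ≤ f m - h * m := fun m hm => hmin hm
  have hL : sInf ((fun m => f m - h * m) '' K) = f m₀ - h * m₀ := by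
    apply le_antisymm
    · exact csInf_le ⟨f m₀ - h * m₀, by rintro _ ⟨m, hm, rfl⟩; exact hmin' m hm⟩
        ⟨m₀, hm₀K, rfl⟩
    · exact le_csInf ⟨f m₀ - h * m₀, m₀, hm₀K, rfl⟩
        (by rintro _ ⟨m, hm, rfl⟩; exact hmin' m hm)
  rw [hL]
  rw [Metric.tendsto_nhds]
  intro ε hε
  have hε3 : (0:ℝ) < ε / 3 := by linarith
  -- continuity at m₀
  obtain ⟨δ, hδ, hδφ⟩ := Metric.continuousWithinAt_iff.mp (hφc m₀ hm₀K) (ε/3) hε3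
  -- uniform convergence
  have huev : ∀ᶠ N in atTop, ∀ x ∈ K, dist (f x) (fN N x) < ε/3 :=
    Metric.tendstoUniformlyOn_iff.mp hunif (ε/3) hε3
  -- density
  obtain ⟨N₁, hN₁⟩ := hdense m₀ hm₀K δ hδ
  have hdev : ∀ᶠ N in atTop, ∃ m' ∈ A N, |m' - m₀| < δ := eventually_atTop.mpr ⟨N₁, hN₁⟩
  -- entropy correction tends to zero
  have hg : Tendsto (fun N : ℕ => (Real.log C + p * Real.log N) / ((N:ℝ) * β))
      atTop (nhds 0) := by
    have h1 : Tendsto (fun N : ℕ => ((N:ℝ) * β)⁻¹) atTop (nhds 0) :=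
      (tendsto_natCast_atTop_atTop.atTop_mul_const hβ).inv_tendsto_atTop
    have h2 : Tendsto (fun N : ℕ => Real.log (N:ℝ) / (N:ℝ)) atTop (nhds 0) :=
      (Real.isLittleO_log_id_atTop.tendsto_div_nhds_zero).comp tendsto_natCast_atTop_atTop
    have h3 := (h1.const_mul (Real.log C)).add (h2.const_mul (p / β))
    simp only [mul_zero, add_zero] at h3
    exact h3.congr (fun N => by push_cast; ring)
  have hgev : ∀ᶠ N : ℕ in atTop, (Real.log C + p * Real.log N) / ((N:ℝ) * β) < ε/3 :=
    hg.eventually (gt_mem_nhds hε3)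
  filter_upwards [huev, hdev, hgev, eventually_ge_atTop 1] with N hu hd hglt hN1
  -- setup
  have hNpos : (0:ℝ) < (N:ℝ) := by exact_mod_cast Nat.lt_of_lt_of_le Nat.zero_lt_one hN1
  have tpos : (0:ℝ) < (N:ℝ) * β := mul_pos hNpos hβ
  have hcardpos : (0:ℝ) < ((A N).card : ℝ) := by exact_mod_cast (hAne N).card_pos
  have hSpos : 0 < ∑ m ∈ A N, Real.exp (-(N : ℝ) * β * (fN N m - h * m)) :=
    Finset.sum_pos (fun m _ => Real.exp_pos _) (hAne N)
  -- card log bound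
  have hCpos : (0:ℝ) < C := by
    nlinarith [Real.rpow_pos_of_pos hNpos p, hC N, hcardpos]
  have hlogcard : Real.log ((A N).card : ℝ) ≤ Real.log C + p * Real.log N := by
    calc Real.log ((A N).card : ℝ) ≤ Real.log (C * (N:ℝ) ^ p) :=
          Real.log_le_log hcardpos (hC N)
      _ = Real.log C + p * Real.log N := by
          rw [Real.log_mul hCpos.ne' (Real.rpow_pos_of_pos hNpos p).ne',
            Real.log_rpow hNpos]
  have hcarddiv : Real.log ((A N).card : ℝ) / ((N:ℝ) * β) < ε/3 :=
    lt_of_le_of_lt ((div_le_div_iff_of_pos_right tpos).mpr hlogcard) hglt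
  -- per-term lower bound
  have hterm : ∀ m ∈ A N, f m₀ - h * m₀ - ε/3 ≤ fN N m - h * m := by
    intro m hm
    have hmK := hAK N hm
    have e1 := hu m hmK
    rw [Real.dist_eq] at e1
    have e1' := abs_lt.mp e1
    have e2 := hmin' m hmK
    linarith [e1'.1, e1'.2]
  -- upper bound on the sum
  have hSle : (∑ m ∈ A N, Real.exp (-(N : ℝ) * β * (fN N m - h * m))) ≤
      ((A N).card : ℝ) * Real.exp (-((N:ℝ) * β * (f m₀ - h * m₀ - ε/3))) := by
    calc (∑ m ∈ A N, Real.exp (-(N : ℝ) * β * (fN N m - h * m)))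
        ≤ ∑ _m ∈ A N, Real.exp (-((N:ℝ) * β * (f m₀ - h * m₀ - ε/3))) := by
          apply Finset.sum_le_sum
          intro m hm
          apply Real.exp_le_exp.mpr
          have := mul_le_mul_of_nonneg_left (hterm m hm) tpos.le
          nlinarith
      _ = ((A N).card : ℝ) * Real.exp (-((N:ℝ) * β * (f m₀ - h * m₀ - ε/3))) := by
          rw [Finset.sum_const, nsmul_eq_mul]
  have hlogS : Real.log (∑ m ∈ A N, Real.exp (-(N : ℝ) * β * (fN N m - h * m))) ≤
      Real.log ((A N).card : ℝ) + -((N:ℝ) * β * (f m₀ - h * m₀ - ε/3)) := by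
    calc Real.log (∑ m ∈ A N, Real.exp (-(N : ℝ) * β * (fN N m - h * m)))
        ≤ Real.log (((A N).card : ℝ) * Real.exp (-((N:ℝ) * β * (f m₀ - h * m₀ - ε/3)))) :=
          Real.log_le_log hSpos hSle
      _ = _ := by rw [Real.log_mul hcardpos.ne' (Real.exp_ne_zero _), Real.log_exp]
  -- lower bound on the sum via the near-minimizer
  obtain ⟨m', hm'A, hm'δ⟩ := hd
  have hm'K : m' ∈ K := hAK N hm'A
  have h1 : fN N m' - h * m' ≤ f m₀ - h * m₀ + 2 * (ε/3) := by
    have e1 := hu m' hm'K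
    rw [Real.dist_eq] at e1
    have e1' := abs_lt.mp e1
    have e2 := hδφ hm'K (by rwa [Real.dist_eq])
    rw [Real.dist_eq] at e2
    have e2' := abs_lt.mp e2
    linarith [e1'.1, e1'.2, e2'.1, e2'.2]
  have hSge : Real.exp (-((N:ℝ) * β * (f m₀ - h * m₀ + 2 * (ε/3)))) ≤
      ∑ m ∈ A N, Real.exp (-(N : ℝ) * β * (fN N m - h * m)) := by
    calc Real.exp (-((N:ℝ) * β * (f m₀ - h * m₀ + 2 * (ε/3))))
        ≤ Real.exp (-(N : ℝ) * β * (fN N m' - h * m')) := by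
          apply Real.exp_le_exp.mpr
          have := mul_le_mul_of_nonneg_left h1 tpos.le
          nlinarith
      _ ≤ _ := Finset.single_le_sum (f := fun m => Real.exp (-(N:ℝ) * β * (fN N m - h * m))) (fun m _ => (Real.exp_pos _).le) hm'A
  have hlogS' : -((N:ℝ) * β * (f m₀ - h * m₀ + 2 * (ε/3))) ≤
      Real.log (∑ m ∈ A N, Real.exp (-(N : ℝ) * β * (fN N m - h * m))) := by
    calc -((N:ℝ) * β * (f m₀ - h * m₀ + 2 * (ε/3)))
        = Real.log (Real.exp (-((N:ℝ) * β * (f m₀ - h * m₀ + 2 * (ε/3))))) :=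
          (Real.log_exp _).symm
      _ ≤ _ := Real.log_le_log (Real.exp_pos _) hSge
  -- conclude
  have hc : -(1 / ((N:ℝ) * β)) ≤ 0 := neg_nonpos.mpr (by positivity)
  have hub := mul_le_mul_of_nonpos_left hlogS' hc
  have hlb := mul_le_mul_of_nonpos_left hlogS hc
  have heq1 : -(1 / ((N:ℝ) * β)) * -((N:ℝ) * β * (f m₀ - h * m₀ + 2 * (ε/3))) =
      f m₀ - h * m₀ + 2 * (ε/3) := by field_simp
  have heq2 : -(1 / ((N:ℝ) * β)) *
      (Real.log ((A N).card : ℝ) + -((N:ℝ) * β * (f m₀ - h * m₀ - ε/3))) =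
      f m₀ - h * m₀ - ε/3 - Real.log ((A N).card : ℝ) / ((N:ℝ) * β) := by
    field_simp
    ring
  rw [heq1] at hub
  rw [heq2] at hlb
  rw [Real.dist_eq, abs_lt]
  constructor <;> linarith
end
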